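/- Let X, Y, L, M̄ be real matrices of compatible dimensions and δ ≥ 0. If the block matrix [[I, Yᵀ, 0],[Y, XYᵀ + YXᵀ, L − XM̄],[0, Lᵀ − M̄ᵀXᵀ, δ²M̄ᵀM̄]] is positive semidefinite and X is invertible, then δ²M̄ᵀM̄ − (L − XM̄)ᵀ(XXᵀ)⁻¹(L − XM̄) ⪰ 0, i.e. δ²M̄ᵀM̄ ⪰ (L − XM̄)ᵀ(XXᵀ)⁻¹(L − XM̄). -/

import Mathlib

open Matrix

lemma aux_posDef_mul_transpose {n : ℕ} (X : Matrix (Fin n) (Fin n) ℝ) (hX : IsUnit X) :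
    (X * Xᵀ).PosDef := by
  have hH : (X * Xᵀ).IsHermitian := by
    have := isHermitian_mul_conjTranspose_self X
    rwa [conjTranspose_eq_transpose_of_trivial] at this
  rw [posDef_iff_dotProduct_mulVec]
  refine ⟨hH, fun x hx => ?_⟩
  have hXt : IsUnit Xᵀ := by
    rw [Matrix.isUnit_iff_isUnit_det, Matrix.det_transpose, ← Matrix.isUnit_iff_isUnit_det]
    exact hX
  have hy : Xᵀ *ᵥ x ≠ 0 := by
    intro h
    apply hx
    have hinj := Matrix.mulVec_injective_iff_isUnit.2 hXt
    exact hinj (by simpa using h)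
  have heq : star x ⬝ᵥ (X * Xᵀ) *ᵥ x = (Xᵀ *ᵥ x) ⬝ᵥ (Xᵀ *ᵥ x) := by
    rw [← mulVec_mulVec, dotProduct_mulVec, star_trivial, ← mulVec_transpose]
  rw [heq]
  refine lt_of_le_of_ne ?_ (fun h => hy (dotProduct_self_eq_zero.1 h.symm))
  exact Finset.sum_nonneg fun i _ => mul_self_nonneg _

open Matrix in
theorem stmt_10 {n m : ℕ} (X Y : Matrix (Fin n) (Fin n) ℝ)
    (L Mbar : Matrix (Fin n) (Fin m) ℝ) (δ : ℝ) (hδ : 0 ≤ δ)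
    (hX : IsUnit X)
    (hΦ : (Matrix.fromBlocks
            (1 : Matrix (Fin n) (Fin n) ℝ)
            (Matrix.fromCols Yᵀ (0 : Matrix (Fin n) (Fin m) ℝ))
            (Matrix.fromRows Y (0 : Matrix (Fin m) (Fin n) ℝ))
            (Matrix.fromBlocks
              (X * Yᵀ + Y * Xᵀ) (L - X * Mbar)
              (L - X * Mbar)ᵀ (δ ^ 2 • (Mbarᵀ * Mbar)))).PosSemidef) :
    (δ ^ 2 • (Mbarᵀ * Mbar) -
      (L - X * Mbar)ᵀ * (X * Xᵀ)⁻¹ * (L - X * Mbar)).PosSemidef := by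
  set B : Matrix (Fin n) (Fin n ⊕ Fin m) ℝ := Matrix.fromCols Yᵀ (0 : Matrix (Fin n) (Fin m) ℝ) with hB
  set D : Matrix (Fin n ⊕ Fin m) (Fin n ⊕ Fin m) ℝ :=
    Matrix.fromBlocks (X * Yᵀ + Y * Xᵀ) (L - X * Mbar)
      (L - X * Mbar)ᵀ (δ ^ 2 • (Mbarᵀ * Mbar)) with hD
  have hBH : Bᴴ = Matrix.fromRows Y (0 : Matrix (Fin m) (Fin n) ℝ) := by
    rw [hB, conjTranspose_fromCols_eq_fromRows_conjTranspose]
    simp [conjTranspose_eq_transpose_of_trivial]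
  haveI : Invertible (1 : Matrix (Fin n) (Fin n) ℝ) := invertibleOne
  have h1 : (D - Bᴴ * (1 : Matrix (Fin n) (Fin n) ℝ)⁻¹ * B).PosSemidef := by
    refine (Matrix.PosDef.fromBlocks₁₁ B D Matrix.PosDef.one).1 ?_
    rw [hBH]
    exact hΦ
  rw [inv_one, Matrix.mul_one, hBH, hB, fromRows_mul_fromCols] at h1
  simp only [Matrix.mul_zero, Matrix.zero_mul] at h1
  have h2 : (Matrix.fromBlocks ((X - Y) * (X - Y)ᵀ) (0 : Matrix (Fin n) (Fin m) ℝ)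
      (0 : Matrix (Fin m) (Fin n) ℝ) (0 : Matrix (Fin m) (Fin m) ℝ)).PosSemidef := by
    have := Matrix.posSemidef_self_mul_conjTranspose
      (Matrix.fromRows (X - Y) (0 : Matrix (Fin m) (Fin n) ℝ))
    rw [conjTranspose_fromRows_eq_fromCols_conjTranspose, conjTranspose_zero,
      conjTranspose_eq_transpose_of_trivial, fromRows_mul_fromCols, Matrix.mul_zero,
      Matrix.zero_mul, Matrix.zero_mul] at this
    exact this
  have h3 := h1.add h2
  have hsum : D - Matrix.fromBlocks (Y * Yᵀ) 0 0 0 +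
      Matrix.fromBlocks ((X - Y) * (X - Y)ᵀ) 0 0 0 =
      Matrix.fromBlocks (X * Xᵀ) (L - X * Mbar) (L - X * Mbar)ᵀ (δ ^ 2 • (Mbarᵀ * Mbar)) := by
    rw [hD, sub_eq_add_neg, Matrix.fromBlocks_neg, Matrix.fromBlocks_add, Matrix.fromBlocks_add]
    congr 1 <;> try simp
    noncomm_ring
  rw [hsum] at h3
  have hXXt : (X * Xᵀ).PosDef := aux_posDef_mul_transpose X hX
  haveI : Invertible (X * Xᵀ) := hXXt.isUnit.invertible
  have h4 := (Matrix.PosDef.fromBlocks₁₁ (L - X * Mbar) (δ ^ 2 • (Mbarᵀ * Mbar)) hXXt).1 ?_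
  · rwa [conjTranspose_eq_transpose_of_trivial] at h4
  · rwa [conjTranspose_eq_transpose_of_trivial]
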